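/- arXiv:2003.02894 — 2 statements merged into one kernel-verified Lean document; each statement's English description precedes it below -/
import Mathlib

section
/- In a finite MDP with rewards bounded by R_max and discount γ ∈ [0,1), for any two transition models p, p', any stationary policy π and any state s: |v_p^π(s) - v_{p'}^π(s)| ≤ γ R_max ‖p_s - p'_s‖_{∞,1} / (1-γ)², where ‖p_s - p'_s‖_{∞,1} := max_{a∈A} Σ_{s'∈S} |p(s'|s,a) - p'(s'|s,a)| is understood as the maximal total-variation-type distance over all states (i.e., with the max also taken over s). -/
/-!
Write `P s s' = p(s' | s, π s)` and `‖·‖` for the sup norm on `S → ℝ`. Averaging against a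
probability vector does not increase the sup norm, so the Bellman equation gives
`‖v'‖ ≤ R_max + γ ‖v'‖`, i.e. `‖v'‖ ≤ R_max / (1 - γ)`. Subtracting the two Bellman equations,
`v - v' = γ P (v - v') + γ (P - P') v'`, hence `‖v - v'‖ ≤ γ ‖v - v'‖ + γ ‖p - p'‖ ‖v'‖`,
and solving for `‖v - v'‖` gives the bound.
-/

section

variable {S : Type*} [Fintype S]

lemma abs_sum_mul_le_sum_abs_mul_norm (g f : S → ℝ) :
    |∑ x, g x * f x| ≤ (∑ x, |g x|) * ‖f‖ := by
  calc |∑ x, g x * f x| ≤ ∑ x, |g x| * |f x| := by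
        simpa only [abs_mul] using Finset.abs_sum_le_sum_abs (fun x => g x * f x) Finset.univ
    _ ≤ ∑ x, |g x| * ‖f‖ :=
        Finset.sum_le_sum fun x _ => mul_le_mul_of_nonneg_left (norm_le_pi_norm f x) (abs_nonneg _)
    _ = (∑ x, |g x|) * ‖f‖ := (Finset.sum_mul ..).symm

lemma abs_sum_mul_le_norm_of_stochastic {q : S → ℝ} (hq0 : ∀ x, 0 ≤ q x) (hq1 : ∑ x, q x = 1)
    (f : S → ℝ) : |∑ x, q x * f x| ≤ ‖f‖ := by
  simpa only [abs_of_nonneg (hq0 _), hq1, one_mul] using abs_sum_mul_le_sum_abs_mul_norm q f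

lemma le_div_one_sub_of_le_add_mul {x a γ : ℝ} (hγ : γ < 1) (h : x ≤ a + γ * x) :
    x ≤ a / (1 - γ) := by
  rw [le_div_iff₀ (by linarith)]
  linarith

variable [Nonempty S] {P : S → S → ℝ} {c v : S → ℝ} {γ : ℝ}

lemma norm_le_of_bellman (hP0 : ∀ s s', 0 ≤ P s s') (hP1 : ∀ s, ∑ s', P s s' = 1) {R : ℝ}
    (hc : ∀ s, |c s| ≤ R) (hγ0 : 0 ≤ γ) (hγ1 : γ < 1)
    (hv : ∀ s, v s = c s + γ * ∑ s', P s s' * v s') :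
    ‖v‖ ≤ R / (1 - γ) := by
  refine le_div_one_sub_of_le_add_mul hγ1 ((pi_norm_le_iff_of_nonempty _).2 fun s => ?_)
  calc ‖v s‖ = |c s + γ * ∑ s', P s s' * v s'| := by rw [Real.norm_eq_abs, hv s]
    _ ≤ |c s| + γ * |∑ s', P s s' * v s'| :=
        (abs_add_le _ _).trans_eq (by rw [abs_mul, abs_of_nonneg hγ0])
    _ ≤ R + γ * ‖v‖ := by
        gcongr
        · exact hc s
        · exact abs_sum_mul_le_norm_of_stochastic (hP0 s) (hP1 s) v

lemma norm_sub_le_of_bellman (hP0 : ∀ s s', 0 ≤ P s s') (hP1 : ∀ s, ∑ s', P s s' = 1)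
    {P' : S → S → ℝ} {D : ℝ} (hD : ∀ s, ∑ s', |P s s' - P' s s'| ≤ D) (hγ0 : 0 ≤ γ)
    (hγ1 : γ < 1) {v' : S → ℝ} (hv : ∀ s, v s = c s + γ * ∑ s', P s s' * v s')
    (hv' : ∀ s, v' s = c s + γ * ∑ s', P' s s' * v' s') :
    ‖v - v'‖ ≤ γ * D * ‖v'‖ / (1 - γ) := by
  refine le_div_one_sub_of_le_add_mul hγ1 ((pi_norm_le_iff_of_nonempty _).2 fun s => ?_)
  have hsplit : v s - v' s =
      γ * (∑ s', P s s' * (v - v') s' + ∑ s', (P s s' - P' s s') * v' s') := by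
    simp only [hv s, hv' s, Pi.sub_apply, ← Finset.sum_add_distrib]
    rw [add_sub_add_left_eq_sub, ← mul_sub, ← Finset.sum_sub_distrib]
    congr 2; ext; ring
  calc ‖(v - v') s‖ = γ * |∑ s', P s s' * (v - v') s' + ∑ s', (P s s' - P' s s') * v' s'| := by
        rw [Pi.sub_apply, Real.norm_eq_abs, hsplit, abs_mul, abs_of_nonneg hγ0]
    _ ≤ γ * (‖v - v'‖ + D * ‖v'‖) := by
        gcongr
        refine (abs_add_le _ _).trans (add_le_add ?_ ?_)
        · exact abs_sum_mul_le_norm_of_stochastic (hP0 s) (hP1 s) _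
        · exact (abs_sum_mul_le_sum_abs_mul_norm _ v').trans
            (mul_le_mul_of_nonneg_right (hD s) (norm_nonneg _))
    _ = γ * D * ‖v'‖ + γ * ‖v - v'‖ := by ring

end

theorem simulation_lemma_general {S A : Type} [Fintype S] [Fintype A]
    [Nonempty S]
    (r : S → A → ℝ) (Rmax γ : ℝ)
    (hr : ∀ s a, |r s a| ≤ Rmax)
    (hγ0 : 0 ≤ γ) (hγ1 : γ < 1)
    (π : S → A)
    (p p' : S → A → S → ℝ)
    (hp0 : ∀ s a s', 0 ≤ p s a s') (hp1 : ∀ s a, ∑ s', p s a s' = 1)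
    (hp0' : ∀ s a s', 0 ≤ p' s a s') (hp1' : ∀ s a, ∑ s', p' s a s' = 1)
    (v v' : S → ℝ)
    (hBell : ∀ s, v s = r s (π s) + γ * ∑ s', p s (π s) s' * v s')
    (hBell' : ∀ s, v' s = r s (π s) + γ * ∑ s', p' s (π s) s' * v' s')
    (s : S) :
    |v s - v' s| ≤
      γ * Rmax * (⨆ t : S, ⨆ a : A, ∑ s', |p t a s' - p' t a s'|) / (1 - γ) ^ 2 := by
  set D := ⨆ t : S, ⨆ a : A, ∑ s', |p t a s' - p' t a s'|
  have hD (t : S) : ∑ s', |p t (π t) s' - p' t (π t) s'| ≤ D :=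
    le_ciSup_of_le (Set.finite_range _).bddAbove t <|
      le_ciSup (f := fun a => ∑ s', |p t a s' - p' t a s'|) (Set.finite_range _).bddAbove (π t)
  have hγD : 0 ≤ γ * D :=
    mul_nonneg hγ0 ((Finset.sum_nonneg fun _ _ => abs_nonneg _).trans (hD s))
  have hv' : ‖v'‖ ≤ Rmax / (1 - γ) :=
    norm_le_of_bellman (fun t => hp0' t (π t)) (fun t => hp1' t (π t)) (fun t => hr t (π t))
      hγ0 hγ1 hBell'
  have hdiff : ‖v - v'‖ ≤ γ * D * ‖v'‖ / (1 - γ) :=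
    norm_sub_le_of_bellman (fun t => hp0 t (π t)) (fun t => hp1 t (π t)) hD hγ0 hγ1 hBell hBell'
  have h1γ : 0 < 1 - γ := by linarith
  calc |v s - v' s| = ‖(v - v') s‖ := (Real.norm_eq_abs _).symm
    _ ≤ ‖v - v'‖ := norm_le_pi_norm _ s
    _ ≤ γ * D * (Rmax / (1 - γ)) / (1 - γ) := hdiff.trans (by gcongr)
    _ = γ * Rmax * D / (1 - γ) ^ 2 := by field_simp

/-- simulation lemma, Strehl–Littman: in a finite MDP with
rewards bounded by `Rmax` and discount `γ ∈ [0,1)`, for any two transition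
models `p, p'`, any stationary policy `π` and any state `s`,
`|v_p^π(s) - v_{p'}^π(s)| ≤ γ Rmax ‖p - p'‖_{∞,1} / (1-γ)²`, where
`‖p - p'‖_{∞,1} = max_{s,a} ∑_{s'} |p(s'|s,a) - p'(s'|s,a)|`. -/
theorem simulation_lemma {S A : Type} [Fintype S] [Fintype A]
    [Nonempty S] [Nonempty A]
    (r : S → A → ℝ) (Rmax γ : ℝ)
    (hr : ∀ s a, |r s a| ≤ Rmax)
    (hγ0 : 0 ≤ γ) (hγ1 : γ < 1)
    (π : S → A)
    (p p' : S → A → S → ℝ)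
    (hp0 : ∀ s a s', 0 ≤ p s a s') (hp1 : ∀ s a, ∑ s', p s a s' = 1)
    (hp0' : ∀ s a s', 0 ≤ p' s a s') (hp1' : ∀ s a, ∑ s', p' s a s' = 1)
    (v v' : S → ℝ)
    (hBell : ∀ s, v s = r s (π s) + γ * ∑ s', p s (π s) s' * v s')
    (hBell' : ∀ s, v' s = r s (π s) + γ * ∑ s', p' s (π s) s' * v' s')
    (s : S) :
    |v s - v' s| ≤
      γ * Rmax * (⨆ t : S, ⨆ a : A, ∑ s', |p t a s' - p' t a s'|) / (1 - γ) ^ 2 :=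
  simulation_lemma_general r Rmax γ hr hγ0 hγ1 π p p' hp0 hp1 hp0' hp1' v v' hBell hBell' s
end

section
/- Consider a finite-state Wasserstein DRMDP whose ambiguity set is the 1-Wasserstein ball 𝔐_α(μ̂_n) of radius α centered at the empirical distribution μ̂_n = (1/n)Σ_{i=1}^n δ_{p̂_i} over transition models. For every policy π and state s, the distributionally robust value function satisfies the lower bound: inf_{μ∈𝔐_α(μ̂_n)} E_{p∼μ}[v_p^π(s)] ≥ (1/n)Σ_{i=1}^n v_{p̂_i}^π(s) - κ_s^π · α, where κ_s^π := sup{‖z‖_* : z in the effective domain of (ũ_s^π)*} and ũ_s^π is the L-Lipschitz extension of p ↦ v_p^π(s); moreover κ_s^π ≤ βγR_max/(1-γ)², where β satisfies Σ_s ‖p_s‖_{∞,1} ≤ β‖p‖ for the chosen norm. -/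
open MeasureTheory
open scoped BigOperators ENNReal

/-- Transition models of a finite MDP: `p s a s'` is the probability of moving
from `s` to `s'` under action `a`. -/
abbrev Model (S A : Type) : Type := S → A → S → ℝ

/-- `p` is a transition kernel: nonnegative and rows summing to one. -/
def IsKernel {S A : Type} [Fintype S] (p : Model S A) : Prop :=
  ∀ s a, (∀ s', 0 ≤ p s a s') ∧ ∑ s', p s a s' = 1

/-- Euclidean pairing on the model space. -/
noncomputable def dotp {S A : Type} [Fintype S] [Fintype A]
    (z q : Model S A) : ℝ :=
  ∑ s, ∑ a, ∑ s', z s a s' * q s a s'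

/-- Dual norm with respect to a norm `N` on the model space. -/
noncomputable def dualN {S A : Type} [Fintype S] [Fintype A]
    (N : Model S A → ℝ) (z : Model S A) : ℝ :=
  sSup {r | ∃ x : Model S A, N x ≤ 1 ∧ r = dotp z x}

/-- Legendre–Fenchel conjugate of a real-valued function on the model space. -/
noncomputable def conjM {S A : Type} [Fintype S] [Fintype A]
    (f : Model S A → ℝ) (z : Model S A) : EReal :=
  ⨆ q : Model S A, ((dotp z q - f q : ℝ) : EReal)

/-- 1-Wasserstein distance (w.r.t. the norm `N`) between measures on models,
defined as the infimum over couplings of the expected distance. -/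
noncomputable def wassDist {S A : Type} [Fintype S] [Fintype A]
    (N : Model S A → ℝ) (μ ν : Measure (Model S A)) : ℝ :=
  sInf {c | ∃ γ : Measure (Model S A × Model S A),
    IsProbabilityMeasure γ ∧ γ.map Prod.fst = μ ∧ γ.map Prod.snd = ν ∧
    c = ∫ q, N (q.1 - q.2) ∂γ}

/-- Empirical distribution `μ̂_n = (1/n) ∑ᵢ δ_{p̂ᵢ}` over transition models. -/
noncomputable def empiricalM {S A : Type} [Fintype S] [Fintype A]
    (n : ℕ) (phat : Fin n → Model S A) : Measure (Model S A) :=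
  ((n : ℝ≥0∞)⁻¹) • ∑ i : Fin n, Measure.dirac (phat i)

/-- `L`-Lipschitz continuation `ũ_s^π` of `p ↦ v_p^π(s)` from the set of
kernels to the whole model space. -/
noncomputable def lipExt {S A : Type} [Fintype S] [Fintype A]
    (N : Model S A → ℝ) (val : Model S A → S → ℝ) (s : S) (L : ℝ)
    (q : Model S A) : ℝ :=
  sInf {y | ∃ p : Model S A, IsKernel p ∧ y = val p s + L * N (p - q)}

/-!
By the simulation lemma, `p ↦ v_p^π(s)` is `L`-Lipschitz for the seminorm `N` on the set of
kernels, with `L = βγR_max/(1-γ)²`. Its McShane extension `ũ = lipExt` is `L`-Lipschitz on the whole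
model space and agrees with `v` on kernels, so integrating `ũ p - ũ q ≤ L N(p - q)` against a
coupling of `μ̂_n` and any admissible `μ` bounds the robust value below by the empirical mean
minus `L α`. Finally `κ = L`: every `z` in the domain of `ũ*` has `‖z‖_* ≤ L` because `ũ` grows
at most with slope `L`, while the Hahn–Banach functional supporting `L N` at a point where
`N ≠ 0` lies in that domain and has dual norm exactly `L`.
-/

section Bellman

variable {S A : Type} [Fintype S]

theorem abs_le_div_one_sub_of_mem_rowStochastic [DecidableEq S] {P : Matrix S S ℝ}
    (hP : P ∈ Matrix.rowStochastic ℝ S) {x : S → ℝ} {c γ : ℝ} (hγ0 : 0 ≤ γ) (hγ1 : γ < 1)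
    (h : ∀ t, |x t| ≤ c + γ * ∑ s', P t s' * |x s'|) (t : S) : |x t| ≤ c / (1 - γ) := by
  have : Nonempty S := ⟨t⟩
  obtain ⟨t₀, ht₀⟩ := Finite.exists_max fun t => |x t|
  have havg : ∑ s', P t₀ s' * |x s'| ≤ |x t₀| :=
    calc ∑ s', P t₀ s' * |x s'| ≤ ∑ s', P t₀ s' * |x t₀| :=
          Finset.sum_le_sum fun s' _ =>
            mul_le_mul_of_nonneg_left (ht₀ s') (Matrix.nonneg_of_mem_rowStochastic hP)
      _ = |x t₀| := by rw [← Finset.sum_mul, Matrix.sum_row_of_mem_rowStochastic hP, one_mul]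
  have hmax : |x t₀| ≤ c / (1 - γ) := by
    rw [le_div_iff₀ (by linarith)]
    nlinarith [h t₀, mul_le_mul_of_nonneg_left havg hγ0]
  exact (ht₀ t).trans hmax

theorem IsKernel.mem_rowStochastic [DecidableEq S] {p : Model S A} (hp : IsKernel p)
    (π : S → A) : Matrix.of (fun t s' => p t (π t) s') ∈ Matrix.rowStochastic ℝ S :=
  Matrix.mem_rowStochastic_iff_sum.2 ⟨fun t s' => (hp t (π t)).1 s', fun t => (hp t (π t)).2⟩

variable {r : S → A → ℝ} {γ : ℝ} {π : S → A}

theorem abs_value_le {p : Model S A} (hp : IsKernel p) {v : S → ℝ}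
    (hv : ∀ t, v t = r t (π t) + γ * ∑ s', p t (π t) s' * v s') {Rmax : ℝ}
    (hr : ∀ t, |r t (π t)| ≤ Rmax) (hγ0 : 0 ≤ γ) (hγ1 : γ < 1) (t : S) :
    |v t| ≤ Rmax / (1 - γ) := by
  classical
  refine abs_le_div_one_sub_of_mem_rowStochastic (hp.mem_rowStochastic π) hγ0 hγ1
    (fun t => ?_) t
  calc |v t| ≤ |r t (π t)| + |γ * ∑ s', p t (π t) s' * v s'| := by
        rw [hv t]
        exact abs_add_le _ _
    _ ≤ Rmax + γ * ∑ s', p t (π t) s' * |v s'| := by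
        rw [abs_mul, abs_of_nonneg hγ0]
        gcongr
        · exact hr t
        refine (Finset.abs_sum_le_sum_abs _ _).trans_eq (Finset.sum_congr rfl fun s' _ => ?_)
        rw [abs_mul, abs_of_nonneg ((hp t (π t)).1 s')]

theorem abs_value_sub_le {p q : Model S A} (hq : IsKernel q) {v w : S → ℝ}
    (hv : ∀ t, v t = r t (π t) + γ * ∑ s', p t (π t) s' * v s')
    (hw : ∀ t, w t = r t (π t) + γ * ∑ s', q t (π t) s' * w s')
    (hγ0 : 0 ≤ γ) (hγ1 : γ < 1) {M D : ℝ} (hM : ∀ t, |v t| ≤ M)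
    (hD : ∀ t, ∑ s', |p t (π t) s' - q t (π t) s'| ≤ D) (t : S) :
    |v t - w t| ≤ γ * M * D / (1 - γ) := by
  classical
  refine abs_le_div_one_sub_of_mem_rowStochastic (x := fun t => v t - w t)
    (hq.mem_rowStochastic π) hγ0 hγ1 (fun t => ?_) t
  have hsplit : v t - w t = γ * (∑ s', (p t (π t) s' - q t (π t) s') * v s'
      + ∑ s', q t (π t) s' * (v s' - w s')) := by
    rw [hv t, hw t, add_sub_add_left_eq_sub, ← mul_sub, ← Finset.sum_sub_distrib,
      ← Finset.sum_add_distrib]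
    exact congrArg _ (Finset.sum_congr rfl fun s' _ => by ring)
  have hfirst : |∑ s', (p t (π t) s' - q t (π t) s') * v s'| ≤ M * D :=
    calc _ ≤ ∑ s', |p t (π t) s' - q t (π t) s'| * M :=
          (Finset.abs_sum_le_sum_abs _ _).trans (Finset.sum_le_sum fun s' _ => by
            rw [abs_mul]; exact mul_le_mul_of_nonneg_left (hM s') (abs_nonneg _))
      _ ≤ D * M := by
          rw [← Finset.sum_mul]
          exact mul_le_mul_of_nonneg_right (hD t) ((abs_nonneg _).trans (hM t))
      _ = M * D := mul_comm _ _
  have hsecond : |∑ s', q t (π t) s' * (v s' - w s')|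
      ≤ ∑ s', q t (π t) s' * |v s' - w s'| :=
    (Finset.abs_sum_le_sum_abs _ _).trans_eq (Finset.sum_congr rfl fun s' _ => by
      rw [abs_mul, abs_of_nonneg ((hq t (π t)).1 s')])
  rw [hsplit, abs_mul, abs_of_nonneg hγ0, mul_assoc, ← mul_add]
  exact mul_le_mul_of_nonneg_left ((abs_add_le _ _).trans (add_le_add hfirst hsecond)) hγ0

variable [Fintype A]

theorem sum_abs_le_of_sum_iSup_le {β : ℝ} {N : Model S A → ℝ}
    (hβN : ∀ p : Model S A, ∑ s, (⨆ a : A, ∑ s', |p s a s'|) ≤ β * N p)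
    (x : Model S A) (t : S) (a : A) : ∑ s', |x t a s'| ≤ β * N x := by
  have hrow : ∀ t, 0 ≤ ⨆ a : A, ∑ s', |x t a s'| := fun t =>
    Real.iSup_nonneg fun a => Finset.sum_nonneg fun s' _ => abs_nonneg _
  calc ∑ s', |x t a s'| ≤ ⨆ a : A, ∑ s', |x t a s'| :=
        le_ciSup (f := fun a => ∑ s', |x t a s'|) (Set.finite_range _).bddAbove a
    _ ≤ ∑ t, ⨆ a : A, ∑ s', |x t a s'| :=
        Finset.single_le_sum (fun t _ => hrow t) (Finset.mem_univ t)
    _ ≤ β * N x := hβN x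

theorem abs_value_sub_le_mul {Rmax β : ℝ} {p q : Model S A}
    (hp : IsKernel p) (hq : IsKernel q) {v w : S → ℝ}
    (hv : ∀ t, v t = r t (π t) + γ * ∑ s', p t (π t) s' * v s')
    (hw : ∀ t, w t = r t (π t) + γ * ∑ s', q t (π t) s' * w s')
    (hr : ∀ t, |r t (π t)| ≤ Rmax) (hγ0 : 0 ≤ γ) (hγ1 : γ < 1) {N : Model S A → ℝ}
    (hβN : ∀ p : Model S A, ∑ s, (⨆ a : A, ∑ s', |p s a s'|) ≤ β * N p) (t : S) :
    |v t - w t| ≤ β * γ * Rmax / (1 - γ) ^ 2 * N (p - q) := by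
  have h := abs_value_sub_le hq hv hw hγ0 hγ1 (abs_value_le hp hv hr hγ0 hγ1)
    (fun t => by simpa using sum_abs_le_of_sum_iSup_le hβN (p - q) t (π t)) t
  have h1 : (1 - γ) ≠ 0 := by linarith
  convert h using 1
  field_simp

end Bellman

section Kernels

variable {S A : Type} [Fintype S]

theorem exists_isKernel : ∃ p : Model S A, IsKernel p := by
  refine ⟨fun _ _ _ => (Fintype.card S : ℝ)⁻¹, fun t _ => ⟨fun _ => by positivity, ?_⟩⟩
  have : Nonempty S := ⟨t⟩
  simp

theorem IsKernel.le_one {p : Model S A} (hp : IsKernel p) (t : S) (a : A) (s' : S) :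
    p t a s' ≤ 1 :=
  (hp t a).2 ▸ Finset.single_le_sum (fun i _ => (hp t a).1 i) (Finset.mem_univ s')

theorem isCompact_setOf_isKernel [Fintype A] : IsCompact {p : Model S A | IsKernel p} := by
  have hclosed : IsClosed {p : Model S A | IsKernel p} := by
    simp only [IsKernel, Set.ofPred_forall, Set.ofPred_and]
    refine isClosed_iInter fun t => isClosed_iInter fun a => IsClosed.inter
      (isClosed_iInter fun s' => isClosed_le continuous_const (by fun_prop))
      (isClosed_eq (by fun_prop) continuous_const)
  refine Metric.isCompact_of_isClosed_isBounded hclosed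
    ((Metric.isBounded_closedBall (x := 0) (r := 1)).subset fun p hp => ?_)
  refine mem_closedBall_zero_iff.2 (pi_norm_le_iff_of_nonneg zero_le_one |>.2 fun t => ?_)
  refine pi_norm_le_iff_of_nonneg zero_le_one |>.2 fun a => ?_
  refine pi_norm_le_iff_of_nonneg zero_le_one |>.2 fun s' => ?_
  rw [Real.norm_eq_abs, abs_le]
  exact ⟨by linarith [(hp t a).1 s'], hp.le_one t a s'⟩

end Kernels

theorem Seminorm.continuous_of_finiteDimensional {E : Type*} [NormedAddCommGroup E]
    [NormedSpace ℝ E] [FiniteDimensional ℝ E] (N : Seminorm ℝ E) : Continuous N :=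
  N.convexOn.locallyLipschitz.continuous

theorem Seminorm.exists_linearMap_le_eq {E : Type*} [AddCommGroup E] [Module ℝ E]
    (N : Seminorm ℝ E) (x : E) : ∃ g : E →ₗ[ℝ] ℝ, (∀ y, g y ≤ N y) ∧ g x = N x := by
  rcases eq_or_ne x 0 with rfl | hx
  · exact ⟨0, fun y => apply_nonneg N y, by simp⟩
  let c := LinearEquiv.coord ℝ E x hx
  obtain ⟨g, hg, hgN⟩ := Module.Dual.exists_extension_of_le_seminorm_real (ℝ ∙ x)
    (N x • c.toLinearMap) (p := N) fun y => by
      rw [← LinearEquiv.coord_apply_smul ℝ E x hx y, map_smul_eq_mul, Real.norm_eq_abs]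
      simp only [LinearMap.smul_apply, LinearEquiv.coe_coe, smul_eq_mul, c]
      rw [mul_comm]
      exact mul_le_mul_of_nonneg_right (le_abs_self _) (apply_nonneg N x)
  refine ⟨g, fun y => (le_abs_self _).trans (hgN y), ?_⟩
  rw [hg ⟨x, Submodule.mem_span_singleton_self x⟩]
  simp [c, LinearEquiv.coord_self]

section Duality

variable {S A : Type} [Fintype S] [Fintype A]

theorem dotp_smul_right (z x : Model S A) (t : ℝ) : dotp z (t • x) = t * dotp z x := by
  simp only [dotp, Finset.mul_sum, Pi.smul_apply, smul_eq_mul, mul_left_comm]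

theorem exists_dotp_eq (g : Model S A →ₗ[ℝ] ℝ) : ∃ z : Model S A, ∀ q, dotp z q = g q := by
  classical
  refine ⟨fun t a s' => g (Pi.single t (Pi.single a (Pi.single s' 1))), fun q => ?_⟩
  have hq : q = ∑ t, ∑ a, ∑ s', q t a s' • Pi.single t (Pi.single a (Pi.single s' (1 : ℝ))) := by
    ext t a s'
    simp only [Finset.sum_apply, Pi.smul_apply, smul_eq_mul, Pi.single_apply, ite_apply,
      Pi.zero_apply]
    simp
  conv_rhs => rw [hq]
  simp only [map_sum, map_smul, smul_eq_mul, dotp, mul_comm]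

theorem conjM_lt_top_iff {f : Model S A → ℝ} {z : Model S A} :
    conjM f z < ⊤ ↔ ∃ C : ℝ, ∀ q, dotp z q - f q ≤ C := by
  constructor
  · intro h
    obtain ⟨C, hC, -⟩ := EReal.lt_iff_exists_real_btwn.1 h
    exact ⟨C, fun q => EReal.coe_le_coe_iff.1 ((le_iSup _ q).trans hC.le)⟩
  · rintro ⟨C, hC⟩
    exact (iSup_le fun q => EReal.coe_le_coe_iff.2 (hC q)).trans_lt (EReal.coe_lt_top C)

variable (N : Seminorm ℝ (Model S A))

theorem dualN_le_of_conjM_lt_top {L : ℝ} (hL : 0 ≤ L) {f : Model S A → ℝ} {C : ℝ}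
    (hf : ∀ q, f q ≤ C + L * N q) {z : Model S A} (hz : conjM f z < ⊤) : dualN N z ≤ L := by
  obtain ⟨C', hC'⟩ := conjM_lt_top_iff.1 hz
  refine csSup_le ⟨0, 0, by simp, by simp [dotp]⟩ ?_
  rintro _ ⟨x, hx, rfl⟩
  -- Along the ray `t • x` the conjugate is at least `t * (dotp z x - L)` minus a constant.
  have hray : ∀ t : ℝ, 0 < t → t * (dotp z x - L) ≤ C' + C := by
    intro t ht
    have h1 := hC' (t • x)
    have h2 := hf (t • x)
    rw [dotp_smul_right] at h1
    rw [map_smul_eq_mul, Real.norm_eq_abs, abs_of_pos ht] at h2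
    nlinarith [mul_le_mul_of_nonneg_left hx (mul_nonneg hL ht.le)]
  by_contra! hlt
  have h := hray ((|C' + C| + 1) / (dotp z x - L)) (by positivity)
  rw [div_mul_cancel₀ _ (by linarith)] at h
  linarith [le_abs_self (C' + C)]

theorem dualN_eq_of_linearMap_le {L : ℝ} (hL : 0 ≤ L) {g : Model S A →ₗ[ℝ] ℝ}
    (hg : ∀ y, g y ≤ N y) {x : Model S A} (hgx : g x = N x) (hx : N x ≠ 0) {z : Model S A}
    (hz : ∀ q, dotp z q = L * g q) : dualN N z = L := by
  refine IsGreatest.csSup_eq ⟨⟨(N x)⁻¹ • x, ?_, ?_⟩, ?_⟩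
  · rw [map_smul_eq_mul, Real.norm_eq_abs, abs_of_nonneg (inv_nonneg.2 (apply_nonneg N x)),
      inv_mul_cancel₀ hx]
  · rw [hz, map_smul, smul_eq_mul, hgx, inv_mul_cancel₀ hx, mul_one]
  · rintro _ ⟨y, hy, rfl⟩
    rw [hz]
    nlinarith [hg y]

end Duality

section LipschitzExtension

variable {S A : Type} [Fintype S] [Fintype A] (N : Seminorm ℝ (Model S A))
  {val : Model S A → S → ℝ} {s : S} {L : ℝ}

theorem lipExt_le (hL : 0 ≤ L)
    (hlip : ∀ p q, IsKernel p → IsKernel q → val p s - val q s ≤ L * N (p - q))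
    {p : Model S A} (hp : IsKernel p) (q : Model S A) :
    lipExt N val s L q ≤ val p s + L * N (p - q) := by
  obtain ⟨p₀, hp₀⟩ := exists_isKernel (S := S) (A := A)
  refine csInf_le ⟨val p₀ s - L * N (q - p₀), ?_⟩ ⟨p, hp, rfl⟩
  rintro _ ⟨p', hp', rfl⟩
  have htri : N (p₀ - p') ≤ N (p' - q) + N (q - p₀) := by
    rw [map_sub_rev, ← sub_add_sub_cancel p' q p₀]
    exact map_add_le_add N _ _
  nlinarith [hlip p₀ p' hp₀ hp']

theorem le_lipExt {q : Model S A} {c : ℝ}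
    (h : ∀ p, IsKernel p → c ≤ val p s + L * N (p - q)) : c ≤ lipExt N val s L q := by
  obtain ⟨p₀, hp₀⟩ := exists_isKernel (S := S) (A := A)
  refine le_csInf ⟨_, p₀, hp₀, rfl⟩ ?_
  rintro _ ⟨p, hp, rfl⟩
  exact h p hp

theorem lipExt_eq_of_isKernel (hL : 0 ≤ L)
    (hlip : ∀ p q, IsKernel p → IsKernel q → val p s - val q s ≤ L * N (p - q))
    {p : Model S A} (hp : IsKernel p) : lipExt N val s L p = val p s := by
  refine le_antisymm (by simpa using lipExt_le N hL hlip hp p) (le_lipExt N fun p' hp' => ?_)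
  rw [map_sub_rev]
  linarith [hlip p p' hp hp']

theorem lipExt_le_add (hL : 0 ≤ L)
    (hlip : ∀ p q, IsKernel p → IsKernel q → val p s - val q s ≤ L * N (p - q))
    (x y : Model S A) : lipExt N val s L x ≤ lipExt N val s L y + L * N (x - y) := by
  suffices lipExt N val s L x - L * N (x - y) ≤ lipExt N val s L y by linarith
  refine le_lipExt N fun p hp => ?_
  have htri : N (p - x) ≤ N (p - y) + N (x - y) := by
    rw [← sub_add_sub_cancel p y x, map_sub_rev N x y]
    exact map_add_le_add N _ _
  nlinarith [lipExt_le N hL hlip hp x]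

theorem continuous_lipExt (hL : 0 ≤ L)
    (hlip : ∀ p q, IsKernel p → IsKernel q → val p s - val q s ≤ L * N (p - q)) :
    Continuous (lipExt N val s L) := by
  obtain ⟨C, -, hC⟩ := N.bound_of_continuous_normedSpace N.continuous_of_finiteDimensional
  refine (LipschitzWith.of_le_add_mul' (L * C) fun x y => ?_).continuous
  calc lipExt N val s L x ≤ lipExt N val s L y + L * N (x - y) := lipExt_le_add N hL hlip x y
    _ ≤ lipExt N val s L y + L * C * dist x y := by
      rw [dist_eq_norm, mul_assoc]
      gcongr
      exact hC _

theorem conjM_lipExt_lt_top (hL : 0 ≤ L) {m : ℝ} (hm : ∀ p, IsKernel p → m ≤ val p s)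
    {g : Model S A →ₗ[ℝ] ℝ} (hg : ∀ y, g y ≤ N y) {z : Model S A} (hz : ∀ q, dotp z q = L * g q) :
    conjM (lipExt N val s L) z < ⊤ := by
  obtain ⟨B, hB⟩ := isCompact_setOf_isKernel.exists_bound_of_continuousOn
    N.continuous_of_finiteDimensional.continuousOn
  refine conjM_lt_top_iff.2 ⟨L * B - m, fun q => ?_⟩
  suffices L * g q - (L * B - m) ≤ lipExt N val s L q by rw [hz]; linarith
  refine le_lipExt N fun p hp => ?_
  have hgq : g q ≤ N (p - q) + B := by
    have := hB p hp
    rw [Real.norm_eq_abs, abs_le] at this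
    have hsplit : g q = g (q - p) + g p := by rw [← map_add, sub_add_cancel]
    rw [map_sub_rev]
    linarith [hg (q - p), hg p]
  nlinarith [hm p hp]

theorem sSup_dualN_conjM_lipExt (hL : 0 ≤ L)
    (hlip : ∀ p q, IsKernel p → IsKernel q → val p s - val q s ≤ L * N (p - q))
    {m : ℝ} (hm : ∀ p, IsKernel p → m ≤ val p s) {x : Model S A} (hx : N x ≠ 0) :
    sSup {c | ∃ z : Model S A, conjM (lipExt N val s L) z < ⊤ ∧ c = dualN N z} = L := by
  obtain ⟨g, hg, hgx⟩ := N.exists_linearMap_le_eq x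
  obtain ⟨z, hz⟩ := exists_dotp_eq (L • g)
  refine IsGreatest.csSup_eq ⟨⟨z, conjM_lipExt_lt_top N hL hm hg hz,
    (dualN_eq_of_linearMap_le N hL hg hgx hx hz).symm⟩, ?_⟩
  rintro _ ⟨z', hz', rfl⟩
  obtain ⟨p₀, hp₀⟩ := exists_isKernel (S := S) (A := A)
  refine dualN_le_of_conjM_lt_top N hL (C := val p₀ s + L * N p₀) (fun q => ?_) hz'
  nlinarith [lipExt_le N hL hlip hp₀ q, map_sub_le_add N p₀ q]

end LipschitzExtension

section Wasserstein

variable {S A : Type} [Fintype S] [Fintype A]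

-- Found by `Prod.opensMeasurableSpace`, but beyond the default `synthInstance.maxSize`.
instance : OpensMeasurableSpace (Model S A × Model S A) := Prod.opensMeasurableSpace

theorem integrable_of_ae_mem_compact {X : Type*} [TopologicalSpace X] [T2Space X]
    [MeasurableSpace X] [OpensMeasurableSpace X] {μ : Measure X} [IsFiniteMeasure μ]
    {K : Set X} (hK : IsCompact K) (hμK : ∀ᵐ x ∂μ, x ∈ K) {f : X → ℝ} (hf : Continuous f) :
    Integrable f μ := by
  rw [← Measure.restrict_eq_self_of_ae_mem hμK]
  exact hf.continuousOn.integrableOn_compact hK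

variable (N : Seminorm ℝ (Model S A)) {μ ν : Measure (Model S A)} {K : Set (Model S A)}
  {u : Model S A → ℝ} {L : ℝ}

theorem integral_sub_integral_le_of_coupling (hK : IsCompact K) (hμK : ∀ᵐ x ∂μ, x ∈ K)
    (hνK : ∀ᵐ x ∂ν, x ∈ K) (hu : Continuous u)
    (hlip : ∀ x ∈ K, ∀ y ∈ K, u x - u y ≤ L * N (x - y))
    {ρ : Measure (Model S A × Model S A)} [IsProbabilityMeasure ρ]
    (hρ₁ : ρ.map Prod.fst = μ) (hρ₂ : ρ.map Prod.snd = ν) :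
    ∫ x, u x ∂μ - ∫ x, u x ∂ν ≤ L * ∫ q, N (q.1 - q.2) ∂ρ := by
  have hρK : ∀ᵐ q ∂ρ, q ∈ K ×ˢ K := by
    filter_upwards [ae_of_ae_map measurable_fst.aemeasurable (hρ₁ ▸ hμK),
      ae_of_ae_map measurable_snd.aemeasurable (hρ₂ ▸ hνK)] with q hq₁ hq₂
    exact ⟨hq₁, hq₂⟩
  have hN := N.continuous_of_finiteDimensional
  have i₁ : Integrable (fun q => u q.1) ρ :=
    integrable_of_ae_mem_compact (hK.prod hK) hρK (by fun_prop)
  have i₂ : Integrable (fun q => u q.2) ρ :=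
    integrable_of_ae_mem_compact (hK.prod hK) hρK (by fun_prop)
  have i₃ : Integrable (fun q => N (q.1 - q.2)) ρ :=
    integrable_of_ae_mem_compact (hK.prod hK) hρK (by fun_prop)
  rw [← hρ₁, ← hρ₂, integral_map measurable_fst.aemeasurable hu.aestronglyMeasurable,
    integral_map measurable_snd.aemeasurable hu.aestronglyMeasurable, ← integral_sub i₁ i₂,
    ← integral_const_mul]
  exact integral_mono_ae (i₁.sub i₂) (i₃.const_mul L) (hρK.mono fun q hq => hlip _ hq.1 _ hq.2)

theorem integral_sub_integral_le_mul_wassDist [IsProbabilityMeasure μ] [IsProbabilityMeasure ν]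
    (hK : IsCompact K) (hμK : ∀ᵐ x ∂μ, x ∈ K) (hνK : ∀ᵐ x ∂ν, x ∈ K) (hu : Continuous u)
    (hL : 0 ≤ L) (hlip : ∀ x ∈ K, ∀ y ∈ K, u x - u y ≤ L * N (x - y)) :
    ∫ x, u x ∂μ - ∫ x, u x ∂ν ≤ L * wassDist N μ ν := by
  rw [wassDist, ← smul_eq_mul, ← Real.sInf_smul_of_nonneg hL]
  refine le_csInf (Set.Nonempty.smul_set ⟨_, μ.prod ν, inferInstance, by simp, by simp, rfl⟩) ?_
  rintro _ ⟨_, ⟨ρ, hρ, hρ₁, hρ₂, rfl⟩, rfl⟩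
  exact integral_sub_integral_le_of_coupling N hK hμK hνK hu hlip hρ₁ hρ₂

theorem wassDist_self (μ : Measure (Model S A)) [IsProbabilityMeasure μ] :
    wassDist N μ μ = 0 := by
  have hdiag : Measurable fun p : Model S A => (p, p) := measurable_id.prodMk measurable_id
  have hcost : ∀ ρ : Measure (Model S A × Model S A), 0 ≤ ∫ q, N (q.1 - q.2) ∂ρ :=
    fun ρ => integral_nonneg fun q => apply_nonneg N _
  refine le_antisymm (csInf_le ⟨0, ?_⟩ ⟨μ.map fun p => (p, p),
    Measure.isProbabilityMeasure_map hdiag.aemeasurable, ?_, ?_, ?_⟩) (Real.sInf_nonneg ?_)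
  · rintro _ ⟨ρ, -, -, -, rfl⟩
    exact hcost ρ
  · rw [Measure.map_map measurable_fst hdiag]
    exact Measure.map_id
  · rw [Measure.map_map measurable_snd hdiag]
    exact Measure.map_id
  · have hN := N.continuous_of_finiteDimensional
    rw [integral_map hdiag.aemeasurable (by fun_prop)]
    simp
  · rintro _ ⟨ρ, -, -, -, rfl⟩
    exact hcost ρ

end Wasserstein

section Empirical

variable {S A : Type} [Fintype S] [Fintype A] {n : ℕ} (phat : Fin n → Model S A)

theorem isProbabilityMeasure_empiricalM (hn : 0 < n) :
    IsProbabilityMeasure (empiricalM n phat) := by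
  constructor
  simp only [empiricalM, Measure.smul_apply, Measure.finsetSum_apply, measure_univ,
    Finset.sum_const, Finset.card_univ, Fintype.card_fin, nsmul_eq_mul, mul_one, smul_eq_mul]
  exact ENNReal.inv_mul_cancel (by simp [hn.ne']) (by simp)

theorem ae_empiricalM_mem {K : Set (Model S A)} (h : ∀ i, phat i ∈ K) :
    ∀ᵐ x ∂empiricalM n phat, x ∈ K := by
  rw [ae_iff]
  simp [empiricalM, Measure.dirac_apply, h]

theorem integral_empiricalM (u : Model S A → ℝ) :
    ∫ x, u x ∂empiricalM n phat = (1 / n : ℝ) * ∑ i, u (phat i) := by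
  rw [empiricalM, integral_smul_measure,
    integral_finsetSum_measure fun i _ => integrable_dirac (by simp)]
  simp [integral_dirac, ENNReal.toReal_inv]

end Empirical

theorem mean_sub_mul_le_integral_of_wassDist_le {S A : Type} [Fintype S] [Fintype A]
    (N : Seminorm ℝ (Model S A)) {val : Model S A → S → ℝ} {s : S} {L : ℝ} (hL : 0 ≤ L)
    (hlip : ∀ p q, IsKernel p → IsKernel q → val p s - val q s ≤ L * N (p - q))
    {n : ℕ} (hn : 0 < n) {phat : Fin n → Model S A} (hphat : ∀ i, IsKernel (phat i))
    {μ : Measure (Model S A)} [IsProbabilityMeasure μ] (hμK : ∀ᵐ p ∂μ, IsKernel p) {α : ℝ}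
    (hμα : wassDist N (empiricalM n phat) μ ≤ α) :
    (1 / n : ℝ) * ∑ i, val (phat i) s - L * α ≤ ∫ p, val p s ∂μ := by
  have := isProbabilityMeasure_empiricalM phat hn
  have hW := integral_sub_integral_le_mul_wassDist N isCompact_setOf_isKernel
    (ae_empiricalM_mem phat hphat) hμK (continuous_lipExt N hL hlip) hL fun p hp q _ => by
      linarith [lipExt_le_add N hL hlip p q, lipExt_eq_of_isKernel N hL hlip hp]
  calc (1 / n : ℝ) * ∑ i, val (phat i) s - L * α
      ≤ ∫ p, lipExt N val s L p ∂empiricalM n phat - L * wassDist N (empiricalM n phat) μ := by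
        rw [integral_empiricalM]
        simp only [lipExt_eq_of_isKernel N hL hlip (hphat _)]
        gcongr
    _ ≤ ∫ p, lipExt N val s L p ∂μ := by linarith
    _ = ∫ p, val p s ∂μ :=
        integral_congr_ae (hμK.mono fun p hp => lipExt_eq_of_isKernel N hL hlip hp)

/-- tabular Wasserstein DRMDP bound: for every policy `π` and
state `s`, the distributionally robust value over the 1-Wasserstein ball of
radius `α` around the empirical distribution satisfies
`inf_{μ ∈ 𝔐_α(μ̂_n)} E_{p∼μ}[v_p^π(s)] ≥ (1/n) ∑ᵢ v_{p̂ᵢ}^π(s) - κ_s^π α`,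
where `κ_s^π = sup {‖z‖_* : z ∈ dom (ũ_s^π)*}` and moreover
`κ_s^π ≤ β γ R_max / (1-γ)²`. -/
theorem tabular_wdrmdp_regularization {S A : Type} [Fintype S] [Fintype A]
    [Nonempty S] [Nonempty A]
    (r : S → A → ℝ) (Rmax γ β α : ℝ)
    (hr : ∀ s a, |r s a| ≤ Rmax)
    (hγ0 : 0 ≤ γ) (hγ1 : γ < 1) (hα : 0 ≤ α) (hβ : 0 ≤ β)
    (N : Model S A → ℝ)
    (hN0 : ∀ x, N x = 0 ↔ x = 0)
    (hNadd : ∀ x y, N (x + y) ≤ N x + N y)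
    (hNsmul : ∀ (c : ℝ) x, N (c • x) = |c| * N x)
    (hβN : ∀ p : Model S A, ∑ s, (⨆ a : A, ∑ s', |p s a s'|) ≤ β * N p)
    (π : S → A)
    (val : Model S A → S → ℝ)
    (hval : ∀ p, IsKernel p →
      ∀ s, val p s = r s (π s) + γ * ∑ s', p s (π s) s' * val p s')
    (n : ℕ) (hn : 0 < n)
    (phat : Fin n → Model S A) (hphat : ∀ i, IsKernel (phat i))
    (s : S) (κ : ℝ)
    (hκ : κ = sSup {c | ∃ z : Model S A,
      conjM (lipExt N val s (β * γ * Rmax / (1 - γ) ^ 2)) z < ⊤ ∧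
      c = dualN N z}) :
    (⨅ μ : {μ : Measure (Model S A) //
        IsProbabilityMeasure μ ∧ μ {p : Model S A | ¬ IsKernel p} = 0 ∧
        wassDist N (empiricalM n phat) μ ≤ α},
      ∫ p, val p s ∂(μ : Measure (Model S A))) ≥
        (1 / n : ℝ) * (∑ i : Fin n, val (phat i) s) - κ * α ∧
    κ ≤ β * γ * Rmax / (1 - γ) ^ 2 := by
  obtain ⟨N, rfl⟩ : ∃ N' : Seminorm ℝ (Model S A), ⇑N' = N :=
    ⟨Seminorm.of N hNadd fun c x => by rw [hNsmul, Real.norm_eq_abs], rfl⟩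
  set L := β * γ * Rmax / (1 - γ) ^ 2
  have hRmax : 0 ≤ Rmax :=
    (abs_nonneg _).trans (hr (Classical.arbitrary S) (Classical.arbitrary A))
  have hL : 0 ≤ L := by positivity
  have hbound : ∀ p, IsKernel p → -(Rmax / (1 - γ)) ≤ val p s := fun p hp =>
    neg_le_of_abs_le (abs_value_le hp (hval p hp) (fun t => hr t (π t)) hγ0 hγ1 s)
  have hlip : ∀ p q, IsKernel p → IsKernel q → val p s - val q s ≤ L * N (p - q) :=
    fun p q hp hq => (le_abs_self _).trans (abs_value_sub_le_mul hp hq (hval p hp) (hval q hq)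
      (fun t => hr t (π t)) hγ0 hγ1 hβN s)
  obtain ⟨x, hx⟩ := exists_ne (0 : Model S A)
  have hκL : κ = L :=
    hκ.trans (sSup_dualN_conjM_lipExt N hL hlip hbound fun h => hx ((hN0 x).1 h))
  refine ⟨?_, hκL.le⟩
  have hemp := isProbabilityMeasure_empiricalM phat hn
  have : Nonempty {μ : Measure (Model S A) // IsProbabilityMeasure μ ∧
      μ {p | ¬ IsKernel p} = 0 ∧ wassDist N (empiricalM n phat) μ ≤ α} :=
    ⟨⟨_, hemp, ae_iff.1 (ae_empiricalM_mem phat hphat), (wassDist_self N _).trans_le hα⟩⟩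
  refine le_ciInf fun ⟨μ, hμ, hμK, hμα⟩ => ?_
  rw [hκL]
  exact mean_sub_mul_le_integral_of_wassDist_le N hL hlip hn hphat (ae_iff.2 hμK) hμα
end
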